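/- arXiv:math/9912134 — 6 statements merged into one kernel-verified Lean document; each statement's English description precedes it below -/
import Mathlib

section
/- Let F be a finite family of closed intervals on the real line. Then there exist a 2-remote subset R ⊆ F and an F-covering subset C ⊆ F with |R| = |C|. Consequently ζ₂(F) = mw(F) = w(F). -/
/-- The closed interval associated to a pair. -/
def Iv (p : ℝ × ℝ) : Set ℝ := Set.Icc p.1 p.2

/-- Two intervals meet (intersect). -/
def Meets (p q : ℝ × ℝ) : Prop := (Iv p ∩ Iv q).Nonempty

/-- `C` covers `F`: every interval of `F` meets some interval of `C`. -/
def IntCovers (C F : Finset (ℝ × ℝ)) : Prop := ∀ p ∈ F, ∃ q ∈ C, Meets p q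

/-- A matching of intervals: pairwise disjoint. -/
def IntMatching (M : Finset (ℝ × ℝ)) : Prop := ∀ p ∈ M, ∀ q ∈ M, p ≠ q → ¬ Meets p q

/-- `R` is 2-remote in `F`: pairwise disjoint and no interval of `F`
meets two distinct members of `R`. -/
def TwoRemote (F R : Finset (ℝ × ℝ)) : Prop :=
  (∀ p ∈ R, ∀ q ∈ R, p ≠ q → ¬ Meets p q) ∧
  ∀ e ∈ F, ∀ p ∈ R, ∀ q ∈ R, p ≠ q → ¬ (Meets e p ∧ Meets e q)

/-- `ζ₂(F)`: maximum size of a 2-remote subset of `F`. -/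
noncomputable def zeta2 (F : Finset (ℝ × ℝ)) : ℕ :=
  sSup {n | ∃ R ⊆ F, TwoRemote F R ∧ R.card = n}

/-- Minimal size of a subset of `F` covering `M`. -/
noncomputable def intCoverNum (M F : Finset (ℝ × ℝ)) : ℕ :=
  sInf {n | ∃ C ⊆ F, IntCovers C M ∧ C.card = n}

/-- The width `w(F)`. -/
noncomputable def intWidth (F : Finset (ℝ × ℝ)) : ℕ := intCoverNum F F

/-- The matching width `mw(F)`. -/
noncomputable def intMatchingWidth (F : Finset (ℝ × ℝ)) : ℕ :=
  sSup {n | ∃ M ⊆ F, IntMatching M ∧ intCoverNum M F = n}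

lemma meets_elim {p q : ℝ × ℝ} (h : Meets p q) : p.1 ≤ q.2 ∧ q.1 ≤ p.2 := by
  obtain ⟨z, hz1, hz2⟩ := h
  exact ⟨le_trans hz1.1 hz2.2, le_trans hz2.1 hz1.2⟩

lemma meets_intro {p q : ℝ × ℝ} (h1 : p.1 ≤ p.2) (h2 : q.1 ≤ q.2)
    (h3 : p.1 ≤ q.2) (h4 : q.1 ≤ p.2) : Meets p q :=
  ⟨max p.1 q.1, ⟨le_max_left _ _, max_le h1 h4⟩, ⟨le_max_right _ _, max_le h3 h2⟩⟩

/-- The greedy construction: for any threshold `t`, there are a 2-remote set `R`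
and a set `C` (of equal size) covering all intervals starting after `t`. -/
lemma greedy (F : Finset (ℝ × ℝ)) (hF : ∀ p ∈ F, p.1 ≤ p.2) :
    ∀ n t, (F.filter (fun q => t < q.1)).card ≤ n →
    ∃ R C : Finset (ℝ × ℝ), R ⊆ F ∧ C ⊆ F ∧ R.card = C.card ∧ TwoRemote F R ∧
      (∀ p ∈ R, t < p.1) ∧ (∀ q ∈ C, t < q.2) ∧
      (∀ e ∈ F, t < e.1 → ∃ q ∈ C, Meets e q) := by
  intro n
  induction n with
  | zero =>
    intro t hcard
    refine ⟨∅, ∅, Finset.empty_subset _, Finset.empty_subset _, rfl,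
      ⟨by simp, by simp⟩, by simp, by simp, ?_⟩
    intro e heF het
    exfalso
    have : e ∈ F.filter (fun q => t < q.1) := Finset.mem_filter.2 ⟨heF, het⟩
    have := Finset.card_pos.2 ⟨e, this⟩
    omega
  | succ n ih =>
    intro t hcard
    rcases Finset.eq_empty_or_nonempty (F.filter (fun q => t < q.1)) with hG | hG
    · refine ⟨∅, ∅, Finset.empty_subset _, Finset.empty_subset _, rfl,
        ⟨by simp, by simp⟩, by simp, by simp, ?_⟩
      intro e heF het
      exfalso
      have : e ∈ F.filter (fun q => t < q.1) := Finset.mem_filter.2 ⟨heF, het⟩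
      rw [hG] at this
      exact absurd this (Finset.notMem_empty e)
    · -- p : minimal right endpoint among intervals starting after t
      obtain ⟨p, hpG, hpmin⟩ := Finset.exists_min_image _ (fun q => q.2) hG
      have hpF : p ∈ F := (Finset.mem_filter.1 hpG).1
      have hpt : t < p.1 := (Finset.mem_filter.1 hpG).2
      have hple : p.1 ≤ p.2 := hF p hpF
      -- A : intervals of F starting before p.2 ; qs : its element with max right end
      have hApne : p ∈ F.filter (fun q => q.1 ≤ p.2) := Finset.mem_filter.2 ⟨hpF, hple⟩
      obtain ⟨qs, hqsA, hqsmax⟩ :=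
        Finset.exists_max_image (F.filter (fun q => q.1 ≤ p.2)) (fun q => q.2) ⟨p, hApne⟩
      have hqsF : qs ∈ F := (Finset.mem_filter.1 hqsA).1
      have hqs1 : qs.1 ≤ p.2 := (Finset.mem_filter.1 hqsA).2
      have hpqs : p.2 ≤ qs.2 := hqsmax p hApne
      -- new threshold t' = qs.2
      have hsub : F.filter (fun q => qs.2 < q.1) ⊆
          (F.filter (fun q => t < q.1)).erase p := by
        intro q hq
        rcases Finset.mem_filter.1 hq with ⟨hqF, hq1⟩
        refine Finset.mem_erase.2 ⟨?_, Finset.mem_filter.2 ⟨hqF, ?_⟩⟩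
        · rintro rfl
          exact absurd hq1 (not_lt.2 (le_trans hple hpqs))
        · exact lt_of_lt_of_le hpt (le_trans hple (le_trans hpqs (le_of_lt hq1)))
      have hcard' : (F.filter (fun q => qs.2 < q.1)).card ≤ n := by
        have h1 := Finset.card_le_card hsub
        have h2 : ((F.filter (fun q => t < q.1)).erase p).card
            = (F.filter (fun q => t < q.1)).card - 1 := Finset.card_erase_of_mem hpG
        have h3 : 1 ≤ (F.filter (fun q => t < q.1)).card := Finset.card_pos.2 ⟨p, hpG⟩
        omega
      obtain ⟨R', C', hR'F, hC'F, hcardeq, ⟨hmatch', hremote'⟩, hR't, hC't, hcov'⟩ :=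
        ih qs.2 hcard'
      -- key facts about R' members
      have hR'far : ∀ r ∈ R', qs.2 < r.1 := hR't
      have hpnotR' : p ∉ R' := fun h => absurd (hR'far p h) (not_lt.2 (le_trans hple hpqs))
      have hqsnotC' : qs ∉ C' := fun h => absurd (hC't qs h) (lt_irrefl _)
      refine ⟨insert p R', insert qs C', ?_, ?_, ?_, ⟨?_, ?_⟩, ?_, ?_, ?_⟩
      · exact Finset.insert_subset hpF hR'F
      · exact Finset.insert_subset hqsF hC'F
      · rw [Finset.card_insert_of_notMem hpnotR', Finset.card_insert_of_notMem hqsnotC',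
          hcardeq]
      · -- matching
        intro a ha b hb hab hm
        rcases Finset.mem_insert.1 ha with rfl | ha' <;>
          rcases Finset.mem_insert.1 hb with rfl | hb'
        · exact hab rfl
        · have h := meets_elim hm
          exact absurd hpqs (not_le.2 (lt_of_lt_of_le (hR'far b hb') h.2))
        · have := meets_elim hm
          exact absurd hpqs (not_le.2 (lt_of_lt_of_le (hR'far a ha') this.1))
        · exact hmatch' a ha' b hb' hab hm
      · -- 2-remote: no e in F meets two distinct members
        intro e heF a ha b hb hab ⟨hea, heb⟩
        have heF2 : e.1 ≤ e.2 := hF e heF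
        -- meeting p forces e.2 ≤ qs.2
        have hmeetp : ∀ c : ℝ × ℝ, Meets e c → qs.2 < c.1 → qs.2 < e.2 :=
          fun c hm hc => lt_of_lt_of_le hc (meets_elim hm).2
        have hmeetsmall : Meets e p → e.2 ≤ qs.2 := by
          intro hm
          have he1 : e.1 ≤ p.2 := (meets_elim hm).1
          exact hqsmax e (Finset.mem_filter.2 ⟨heF, he1⟩)
        rcases Finset.mem_insert.1 ha with rfl | ha' <;>
          rcases Finset.mem_insert.1 hb with rfl | hb'
        · exact hab rfl
        · exact absurd (hmeetp b heb (hR'far b hb')) (not_lt.2 (hmeetsmall hea))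
        · exact absurd (hmeetp a hea (hR'far a ha')) (not_lt.2 (hmeetsmall heb))
        · exact hremote' e heF a ha' b hb' hab ⟨hea, heb⟩
      · -- R members start after t
        intro r hr
        rcases Finset.mem_insert.1 hr with rfl | hr'
        · exact hpt
        · exact lt_trans (lt_of_lt_of_le hpt (le_trans hple hpqs)) (hR'far r hr')
      · -- C members end after t
        intro c hc
        rcases Finset.mem_insert.1 hc with rfl | hc'
        · exact lt_of_lt_of_le hpt (le_trans hple hpqs)
        · exact lt_trans (lt_of_lt_of_le hpt (le_trans hple hpqs)) (hC't c hc')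
      · -- cover
        intro e heF het
        have heF2 : e.1 ≤ e.2 := hF e heF
        by_cases he : qs.2 < e.1
        · obtain ⟨q, hq, hm⟩ := hcov' e heF he
          exact ⟨q, Finset.mem_insert_of_mem hq, hm⟩
        · push_neg at he
          refine ⟨qs, Finset.mem_insert_self _ _, meets_intro heF2 (hF qs hqsF) he ?_⟩
          -- qs.1 ≤ e.2 : qs.1 ≤ p.2 ≤ e.2 since e ∈ G
          have heG : e ∈ F.filter (fun q => t < q.1) := Finset.mem_filter.2 ⟨heF, het⟩
          exact le_trans hqs1 (hpmin e heG)

lemma coverNum_le_card {M F : Finset (ℝ × ℝ)} (hF : ∀ p ∈ F, p.1 ≤ p.2) (hMF : M ⊆ F) :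
    intCoverNum M F ≤ F.card := by
  apply Nat.sInf_le
  exact ⟨F, subset_rfl, fun p hp => ⟨p, hMF hp, meets_intro (hF p (hMF hp)) (hF p (hMF hp))
    (hF p (hMF hp)) (hF p (hMF hp))⟩, rfl⟩

lemma coverSet_nonempty {M F : Finset (ℝ × ℝ)} (hF : ∀ p ∈ F, p.1 ≤ p.2) (hMF : M ⊆ F) :
    {n | ∃ C ⊆ F, IntCovers C M ∧ C.card = n}.Nonempty :=
  ⟨F.card, F, subset_rfl, fun p hp => ⟨p, hMF hp, meets_intro (hF p (hMF hp)) (hF p (hMF hp))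
    (hF p (hMF hp)) (hF p (hMF hp))⟩, rfl⟩

/-- Any cover within F of a 2-remote set R has at least |R| elements. -/
lemma remote_card_le_cover {F R C : Finset (ℝ × ℝ)} (hrem : TwoRemote F R)
    (hCF : C ⊆ F) (hcov : IntCovers C R) : R.card ≤ C.card := by
  by_contra hlt
  push_neg at hlt
  classical
  have hmap : ∀ r ∈ R, (if h : ∃ q ∈ C, Meets r q then h.choose else r) ∈ C := by
    intro r hr
    obtain ⟨q, hq, hm⟩ := hcov r hr
    rw [dif_pos ⟨q, hq, hm⟩]
    exact (⟨q, hq, hm⟩ : ∃ q ∈ C, Meets r q).choose_spec.1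
  obtain ⟨a, ha, b, hb, hab, heq⟩ :=
    Finset.exists_ne_map_eq_of_card_lt_of_maps_to hlt hmap
  have hma : ∃ q ∈ C, Meets a q := hcov a ha
  have hmb : ∃ q ∈ C, Meets b q := hcov b hb
  rw [dif_pos hma, dif_pos hmb] at heq
  have h1 : Meets a hma.choose := hma.choose_spec.2
  have h2 : Meets b hmb.choose := hmb.choose_spec.2
  have hqF : hma.choose ∈ F := hCF hma.choose_spec.1
  apply hrem.2 hma.choose hqF a ha b hb hab
  constructor
  · obtain ⟨z, hz1, hz2⟩ := h1; exact ⟨z, hz2, hz1⟩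
  · rw [heq]; obtain ⟨z, hz1, hz2⟩ := h2; exact ⟨z, hz2, hz1⟩

theorem stmt4 (F : Finset (ℝ × ℝ)) (hF : ∀ p ∈ F, p.1 ≤ p.2) :
    (∃ R ⊆ F, ∃ C ⊆ F, TwoRemote F R ∧ IntCovers C F ∧ R.card = C.card) ∧
    zeta2 F = intMatchingWidth F ∧ intMatchingWidth F = intWidth F := by
  classical
  -- choose a threshold below all left endpoints
  obtain ⟨t, ht⟩ : ∃ t : ℝ, ∀ e ∈ F, t < e.1 := by
    rcases Finset.eq_empty_or_nonempty F with rfl | hne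
    · exact ⟨0, by simp⟩
    · obtain ⟨m, hm, hmin⟩ := Finset.exists_min_image F (fun q => q.1) hne
      exact ⟨m.1 - 1, fun e he => lt_of_lt_of_le (by linarith) (hmin e he)⟩
  obtain ⟨R, C, hRF, hCF, hcard, hrem, _, _, hcov⟩ :=
    greedy F hF (F.filter (fun q => t < q.1)).card t le_rfl
  have hcovF : IntCovers C F := fun e he => hcov e he (ht e he)
  refine ⟨⟨R, hRF, C, hCF, hrem, hcovF, hcard⟩, ?_⟩
  -- Now the numerical equalities.
  set Z := {n | ∃ R ⊆ F, TwoRemote F R ∧ R.card = n} with hZdef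
  set T := {n | ∃ M ⊆ F, IntMatching M ∧ intCoverNum M F = n} with hTdef
  have hZbdd : BddAbove Z := ⟨F.card, fun n ⟨R', hR', _, hc⟩ => hc ▸ Finset.card_le_card hR'⟩
  have hTbdd : BddAbove T := ⟨F.card, fun n ⟨M, hM, _, hc⟩ =>
    hc ▸ coverNum_le_card hF hM⟩
  have hZne : Z.Nonempty := ⟨0, ∅, Finset.empty_subset _, ⟨by simp, by simp⟩, rfl⟩
  have hTne : T.Nonempty := ⟨intCoverNum ∅ F, ∅, Finset.empty_subset _, by simp [IntMatching], rfl⟩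
  -- zeta2 ≤ mw
  have h1 : zeta2 F ≤ intMatchingWidth F := by
    apply csSup_le hZne
    rintro n ⟨R', hR'F, hrem', rfl⟩
    have hRcn : R'.card ≤ intCoverNum R' F := by
      obtain ⟨C', hC'F, hcov', hcc⟩ := Nat.sInf_mem (coverSet_nonempty hF hR'F)
      have h := remote_card_le_cover hrem' hC'F hcov'
      rw [intCoverNum, ← hcc]
      exact h
    calc R'.card ≤ intCoverNum R' F := hRcn
      _ ≤ intMatchingWidth F := le_csSup hTbdd ⟨R', hR'F, hrem'.1, rfl⟩
  -- mw ≤ w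
  have h2 : intMatchingWidth F ≤ intWidth F := by
    apply csSup_le hTne
    rintro n ⟨M, hMF, _, rfl⟩
    obtain ⟨C', hC'F, hcov', hcc⟩ := Nat.sInf_mem (coverSet_nonempty hF (subset_rfl : F ⊆ F))
    have : IntCovers C' M := fun p hp => hcov' p (hMF hp)
    calc intCoverNum M F ≤ C'.card := Nat.sInf_le ⟨C', hC'F, this, rfl⟩
      _ = intWidth F := hcc
  -- w ≤ |C| = |R| ≤ zeta2
  have h3 : intWidth F ≤ C.card := Nat.sInf_le ⟨C, hCF, hcovF, rfl⟩
  have h4 : R.card ≤ zeta2 F := le_csSup hZbdd ⟨R, hRF, hrem, rfl⟩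
  have h5 : intWidth F ≤ zeta2 F := le_trans h3 (hcard ▸ h4)
  omega
end

section
/- Let G be an incomparability graph and k a natural number. Then the k-th power graph G^{*k} (same vertex set, edges between vertices at graph distance at most k in G) is also an incomparability graph. -/
variable {V : Type*}

/-- `G` is an incomparability graph: there is a strict partial order on `V`
such that distinct vertices are adjacent iff incomparable. -/
def IsIncomparabilityGraph (G : SimpleGraph V) : Prop :=
  ∃ r : V → V → Prop, IsStrictOrder V r ∧
    ∀ x y, G.Adj x y ↔ (x ≠ y ∧ ¬ r x y ∧ ¬ r y x)

/-- The `k`-th power of `G`: distinct vertices adjacent iff at distance at most `k`. -/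
def powerGraph (G : SimpleGraph V) (k : ℕ) : SimpleGraph V where
  Adj x y := x ≠ y ∧ G.Reachable x y ∧ G.dist x y ≤ k
  symm := ⟨by
    rintro x y ⟨h1, h2, h3⟩
    exact ⟨h1.symm, h2.symm, by rwa [SimpleGraph.dist_comm]⟩⟩
  loopless := ⟨by rintro x ⟨h1, -⟩; exact h1 rfl⟩

/-!
Let `<` be a strict order whose incomparability graph is `G`. If `a < y < z`, then any walk
from `a` to `z` can be shortened to a walk from `y` to `z`: the first vertex of the walk
that is not below `y` is either `y` itself or incomparable with `y`, hence adjacent to it.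
So `a < y < z` with `dist a z ≤ k` forces `dist y z ≤ k`, which makes `<` minus the pairs
at distance at most `k` transitive; its incomparability graph is `G^{*k}` as soon as
`k ≥ 1`. For `k = 0` the power graph is empty, the incomparability graph of a linear order.
-/

open SimpleGraph

lemma powerGraph_zero (G : SimpleGraph V) : powerGraph G 0 = ⊥ := by
  ext x y
  simp only [powerGraph, bot_adj, iff_false, not_and, Nat.le_zero]
  exact fun hne hreach hd => hne (hreach.dist_eq_zero_iff.mp hd)

lemma le_powerGraph (G : SimpleGraph V) {k : ℕ} (hk : 1 ≤ k) : G ≤ powerGraph G k :=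
  fun _ _ h => ⟨h.ne, h.reachable, (dist_le h.toWalk).trans (by simpa using hk)⟩

lemma isIncomparabilityGraph_bot : IsIncomparabilityGraph (⊥ : SimpleGraph V) := by
  refine ⟨WellOrderingRel, inferInstance, fun x y => ?_⟩
  simp only [bot_adj, false_iff, not_and, not_not]
  exact fun hne hxy => ((trichotomous_of WellOrderingRel x y).resolve_left hxy).resolve_left hne

section

variable {G : SimpleGraph V} {r : V → V → Prop} [IsStrictOrder V r]

lemma exists_walk_length_le_of_lt_of_lt (hG : ∀ x y, G.Adj x y ↔ (x ≠ y ∧ ¬ r x y ∧ ¬ r y x))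
    {a y z : V} (p : G.Walk a z) (hay : r a y) (hyz : r y z) :
    ∃ q : G.Walk y z, q.length ≤ p.length := by
  induction p with
  | nil => exact absurd hyz (asymm hay)
  | @cons a b z hab p ih =>
    by_cases hby : b = y
    · subst hby
      exact ⟨p, p.length.le_succ⟩
    by_cases hrby : r b y
    · obtain ⟨q, hq⟩ := ih hrby hyz
      exact ⟨q, hq.trans p.length.le_succ⟩
    have hryb : ¬ r y b := fun h => ((hG a b).mp hab).2.1 (_root_.trans hay h)
    exact ⟨Walk.cons ((hG y b).mpr ⟨Ne.symm hby, hryb, hrby⟩) p, le_rfl⟩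

lemma powerGraph_adj_of_lt_of_lt (hG : ∀ x y, G.Adj x y ↔ (x ≠ y ∧ ¬ r x y ∧ ¬ r y x))
    {k : ℕ} {a y z : V} (haz : (powerGraph G k).Adj a z) (hay : r a y) (hyz : r y z) :
    (powerGraph G k).Adj y z := by
  obtain ⟨-, hreach, hdist⟩ := haz
  obtain ⟨p, hp⟩ := hreach.exists_walk_length_eq_dist
  obtain ⟨q, hq⟩ := exists_walk_length_le_of_lt_of_lt hG p hay hyz
  exact ⟨ne_of_irrefl hyz, q.reachable, ((dist_le q).trans hq).trans (hp ▸ hdist)⟩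

lemma isStrictOrder_and_not_powerGraph_adj
    (hG : ∀ x y, G.Adj x y ↔ (x ≠ y ∧ ¬ r x y ∧ ¬ r y x)) (k : ℕ) :
    IsStrictOrder V (fun x y => r x y ∧ ¬ (powerGraph G k).Adj x y) where
  irrefl x h := irrefl x h.1
  trans _ _ _ hxy hyz :=
    ⟨_root_.trans hxy.1 hyz.1, fun hxz => hyz.2 (powerGraph_adj_of_lt_of_lt hG hxz hxy.1 hyz.1)⟩

end

theorem stmt6 (G : SimpleGraph V) (hG : IsIncomparabilityGraph G) (k : ℕ) :
    IsIncomparabilityGraph (powerGraph G k) := by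
  obtain ⟨r, hr, hadj⟩ := hG
  rcases Nat.eq_zero_or_pos k with rfl | hk
  · rw [powerGraph_zero]
    exact isIncomparabilityGraph_bot
  refine ⟨_, isStrictOrder_and_not_powerGraph_adj hadj k, fun x y => ⟨?_, ?_⟩⟩
  · exact fun h => ⟨h.ne, fun h' => h'.2 h, fun h' => h'.2 h.symm⟩
  · rintro ⟨hne, hxy, hyx⟩
    by_contra h
    have hGxy : G.Adj x y :=
      (hadj x y).mpr ⟨hne, fun h' => hxy ⟨h', h⟩, fun h' => hyx ⟨h', fun h'' => h h''.symm⟩⟩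
    exact h (le_powerGraph G hk hGxy)
end

section
/- Let G be a graph with a partial order ≻ on V(G) such that distinct vertices are adjacent iff ≻-incomparable, and let k ≥ 1. Define x ⊐ y iff x ≻ y and the distance from x to y in G exceeds k. Then ⊐ is a strict partial order (in particular, it is transitive). -/
/-!
Walking from `a` to `c` along a shortest path, where `a ≻ b` but not `c ≻ b`, let `w` be the first
vertex with `¬ w ≻ b`. Its predecessor `u` satisfies `u ≻ b` and is incomparable to `w`, so `w` is
incomparable to `b` and distinct from it, i.e. adjacent to `b`. Replacing the initial segment up to
`w` by the edge `bw` gives a walk from `b` to `c` no longer than the path, so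
`dist b c ≤ dist a c`. Hence `a ≻ b ≻ c` with `dist a c ≤ k` forces `dist b c ≤ k`.
-/

variable {V : Type*}

namespace SimpleGraph

variable {G : SimpleGraph V} {r : V → V → Prop}

theorem Walk.exists_walk_length_le_of_rel_of_not_rel [IsTrans V r]
    (hadj : ∀ x y, G.Adj x y ↔ (x ≠ y ∧ ¬ r x y ∧ ¬ r y x)) {a b c : V} (p : G.Walk a c)
    (hab : r a b) (hcb : ¬ r c b) : ∃ q : G.Walk b c, q.length ≤ p.length := by
  induction p with
  | nil => exact absurd hab hcb
  | @cons a v c hav p ih =>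
    by_cases hvb : r v b
    · obtain ⟨q, hq⟩ := ih hvb hcb
      exact ⟨q, by simp only [Walk.length_cons]; omega⟩
    · obtain ⟨-, hnav, -⟩ := (hadj a v).mp hav
      have hbv : G.Adj b v := (hadj b v).mpr
        ⟨fun h => hnav (h ▸ hab), fun h => hnav (_root_.trans hab h), hvb⟩
      exact ⟨.cons hbv p, le_rfl⟩

theorem Reachable.dist_le_of_rel_of_not_rel [IsTrans V r]
    (hadj : ∀ x y, G.Adj x y ↔ (x ≠ y ∧ ¬ r x y ∧ ¬ r y x)) {a b c : V} (hac : G.Reachable a c)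
    (hab : r a b) (hcb : ¬ r c b) : G.Reachable b c ∧ G.dist b c ≤ G.dist a c := by
  obtain ⟨p, hp⟩ := hac.exists_walk_length_eq_dist
  obtain ⟨q, hq⟩ := p.exists_walk_length_le_of_rel_of_not_rel hadj hab hcb
  exact ⟨q.reachable, hp ▸ (G.dist_le q).trans hq⟩

end SimpleGraph

theorem stmt7_general (G : SimpleGraph V) (r : V → V → Prop) (hr : IsStrictOrder V r)
    (hadj : ∀ x y, G.Adj x y ↔ (x ≠ y ∧ ¬ r x y ∧ ¬ r y x))
    (k : ℕ) :
    IsStrictOrder V (fun x y => r x y ∧ ¬ (G.Reachable x y ∧ G.dist x y ≤ k)) := by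
  refine { irrefl := fun a h => irrefl a h.1, trans := fun a b c hab hbc => ?_ }
  refine ⟨_root_.trans hab.1 hbc.1, fun ⟨hac, hdist⟩ => hbc.2 ?_⟩
  obtain ⟨hbc', hle⟩ := hac.dist_le_of_rel_of_not_rel hadj hab.1 (asymm hbc.1)
  exact ⟨hbc', hle.trans hdist⟩

theorem stmt7 (G : SimpleGraph V) (r : V → V → Prop) (hr : IsStrictOrder V r)
    (hadj : ∀ x y, G.Adj x y ↔ (x ≠ y ∧ ¬ r x y ∧ ¬ r y x))
    (k : ℕ) (hk : 1 ≤ k) :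
    IsStrictOrder V (fun x y => r x y ∧ ¬ (G.Reachable x y ∧ G.dist x y ≤ k)) :=
  stmt7_general G r hr hadj k
end

section
/- For every finite incomparability graph G and every natural number k ≥ 1, the minimal number of vertex sets each of diameter at most k needed to cover V(G) equals the maximal size of a k-independent set: ρₖ(G) = γₖ(G). -/
variable {V : Type*} [Fintype V] [DecidableEq V]

/-- `S` is `k`-independent: distinct vertices of `S` are at distance greater than `k`. -/
def KIndependent (G : SimpleGraph V) (k : ℕ) (S : Finset V) : Prop :=
  ∀ x ∈ S, ∀ y ∈ S, x ≠ y → ¬ (G.Reachable x y ∧ G.dist x y ≤ k)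

/-- `s` has diameter at most `k` in `G`. -/
def DiamAtMost (G : SimpleGraph V) (k : ℕ) (s : Finset V) : Prop :=
  ∀ x ∈ s, ∀ y ∈ s, G.Reachable x y ∧ G.dist x y ≤ k

/-- `γₖ(G)`: maximal size of a `k`-independent set. -/
noncomputable def gammaK (G : SimpleGraph V) (k : ℕ) : ℕ :=
  sSup {n | ∃ S : Finset V, KIndependent G k S ∧ S.card = n}

/-- `ρₖ(G)`: minimal number of sets of diameter at most `k` covering `V`. -/
noncomputable def rhoK (G : SimpleGraph V) (k : ℕ) : ℕ :=
  sInf {n | ∃ P : Finset (Finset V), (∀ s ∈ P, DiamAtMost G k s) ∧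
    (∀ v : V, ∃ s ∈ P, v ∈ s) ∧ P.card = n}

/-!
If `G` is the incomparability graph of a strict order `<` and `k ≥ 1`, then its `k`-th distance
power is again an incomparability graph, of the order `x ≺ y ↔ x < y ∧ d(x, y) > k`.
Transitivity of `≺` holds because a walk from `x` to `z` with `x < y < z` must pass through `y`
or a neighbour of `y`, whence `d(x, y) + d(y, z) ≤ d(x, z) + 2`. The sets of diameter at most `k`
are then the antichains of `≺` and the `k`-independent sets its chains, so `ρₖ ≤ γₖ` is Mirsky's
theorem (colour each vertex by its height), while `γₖ ≤ ρₖ` is pigeonhole.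
-/

section Cover

variable {V : Type*} {G : SimpleGraph V} {k : ℕ}

lemma reachable_and_dist_le_comm {x y : V} :
    G.Reachable x y ∧ G.dist x y ≤ k ↔ G.Reachable y x ∧ G.dist y x ≤ k := by
  rw [SimpleGraph.reachable_comm, SimpleGraph.dist_comm]

lemma diamAtMost_singleton (v : V) : DiamAtMost G k {v} := by
  intro x hx y hy
  rw [Finset.mem_singleton] at hx hy
  subst hx hy
  exact ⟨.refl _, by simp⟩

lemma KIndependent.card_le_card_of_cover {S : Finset V} {P : Finset (Finset V)}
    (hS : KIndependent G k S) (hP : ∀ t ∈ P, DiamAtMost G k t) (hcover : ∀ v, ∃ t ∈ P, v ∈ t) :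
    S.card ≤ P.card := by
  choose t htP hvt using hcover
  by_contra! hlt
  obtain ⟨x, hx, y, hy, hne, hxy⟩ :=
    Finset.exists_ne_map_eq_of_card_lt_of_maps_to hlt fun v _ => htP v
  exact hS x hx y hy hne (hP _ (htP x) x (hvt x) y (hxy ▸ hvt y))

variable [Fintype V]

lemma card_le_gammaK {S : Finset V} (hS : KIndependent G k S) : S.card ≤ gammaK G k :=
  le_csSup ⟨Fintype.card V, by rintro _ ⟨T, -, rfl⟩; exact T.card_le_univ⟩ ⟨S, hS, rfl⟩

lemma gammaK_le_rhoK : gammaK G k ≤ rhoK G k := by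
  obtain ⟨P, hP, hcover, hcard⟩ : rhoK G k ∈ _ :=
    Nat.sInf_mem ⟨_, Finset.univ.map ⟨singleton, Finset.singleton_injective⟩,
      by simpa using diamAtMost_singleton, fun v => ⟨{v}, by simp⟩, rfl⟩
  rw [← hcard]
  exact csSup_le' fun _ ⟨S, hS, hSc⟩ => hSc ▸ hS.card_le_card_of_cover hP hcover

lemma rhoK_le_of_fibers {n : ℕ} (f : V → Fin n)
    (hf : ∀ x y, x ≠ y → f x = f y → G.Reachable x y ∧ G.dist x y ≤ k) : rhoK G k ≤ n := by
  classical
  let P := Finset.univ.image fun i => Finset.univ.filter (f · = i)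
  have hP : ∀ t ∈ P, DiamAtMost G k t := by
    simp only [P, Finset.mem_image, Finset.mem_univ, true_and, forall_exists_index,
      forall_apply_eq_imp_iff]
    intro i x hx y hy
    simp only [Finset.mem_filter, Finset.mem_univ, true_and] at hx hy
    rcases eq_or_ne x y with rfl | hne
    · exact ⟨.refl x, by simp⟩
    · exact hf x y hne (hx.trans hy.symm)
  have hcover (v : V) : ∃ t ∈ P, v ∈ t :=
    ⟨_, Finset.mem_image_of_mem _ (Finset.mem_univ (f v)), by simp⟩
  calc rhoK G k ≤ P.card := Nat.sInf_le ⟨P, hP, hcover, rfl⟩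
    _ ≤ n := Finset.card_image_le.trans (by simp)

end Cover

theorem exists_strictMono_fin_of_isChain_card_le {α : Type*} [PartialOrder α] {n : ℕ}
    (h : ∀ s : Finset α, IsChain (· ≤ ·) (s : Set α) → s.card ≤ n) :
    ∃ f : α → Fin n, StrictMono f := by
  classical
  have length_lt (p : LTSeries α) : p.length < n := by
    have := h (Finset.univ.image p) (by simpa using p.monotone.isChain_range)
    rwa [Finset.card_image_of_injective _ p.strictMono.injective, Finset.card_univ,
      Fintype.card_fin, Nat.add_one_le_iff] at this
  have height_eq (a : α) : ∃ m < n, Order.height a = m := by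
    have hle : Order.height a ≤ (n - 1 : ℕ) :=
      Order.height_le fun p _ => by exact_mod_cast Nat.le_sub_one_of_lt (length_lt p)
    obtain ⟨m, hm, hmn⟩ := ENat.le_natCast_iff.mp hle
    have hn : 0 < n := length_lt (RelSeries.singleton _ a)
    exact ⟨m, by omega, hm⟩
  choose height hlt hheight using height_eq
  refine ⟨fun a => ⟨height a, hlt a⟩, fun a b hab => ?_⟩
  have := Order.height_strictMono hab (hheight a ▸ ENat.natCast_lt_top _)
  rw [hheight a, hheight b] at this
  exact Fin.mk_lt_mk.mpr (by exact_mod_cast this)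

section Incomparability

variable {V : Type*} {G : SimpleGraph V} {r : V → V → Prop} {k : ℕ} {x y z : V}

lemma SimpleGraph.Walk.exists_mem_support_eq_or_adj [IsStrictOrder V r]
    (hG : ∀ x y, G.Adj x y ↔ x ≠ y ∧ ¬ r x y ∧ ¬ r y x)
    (p : G.Walk x z) (hxy : r x y) (hyz : r y z) : ∃ w ∈ p.support, w = y ∨ G.Adj w y := by
  induction p with
  | nil => exact absurd hyz (asymm hxy)
  | @cons a b c hab q ih =>
    by_cases hb : b = y ∨ G.Adj b y
    · exact ⟨b, by simp, hb⟩
    obtain ⟨w, hw, hwy⟩ : ∃ w ∈ q.support, w = y ∨ G.Adj w y := by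
      have hby : r b y ∨ r y b := by
        by_contra! h
        exact hb (Or.inr ((hG b y).2 ⟨fun h' => hb (Or.inl h'), h⟩))
      refine hby.elim (ih · hyz) fun hyb => ?_
      exact absurd (_root_.trans hxy hyb) ((hG a b).1 hab).2.1
    exact ⟨w, by simp [hw], hwy⟩

lemma SimpleGraph.Walk.exists_walks_length_add_le [IsStrictOrder V r]
    (hG : ∀ x y, G.Adj x y ↔ x ≠ y ∧ ¬ r x y ∧ ¬ r y x)
    (p : G.Walk x z) (hxy : r x y) (hyz : r y z) :
    ∃ (q₁ : G.Walk x y) (q₂ : G.Walk y z), q₁.length + q₂.length ≤ p.length + 2 := by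
  classical
  obtain ⟨w, hw, hwy⟩ := p.exists_mem_support_eq_or_adj hG hxy hyz
  have hsplit := congrArg SimpleGraph.Walk.length (p.take_spec hw)
  rw [SimpleGraph.Walk.length_append] at hsplit
  rcases hwy with rfl | hwy
  · exact ⟨p.takeUntil w hw, p.dropUntil w hw, by omega⟩
  · exact ⟨(p.takeUntil w hw).concat hwy, .cons hwy.symm (p.dropUntil w hw), by simp; omega⟩

def farOrder (r : V → V → Prop) (G : SimpleGraph V) (k : ℕ) (x y : V) : Prop :=
  r x y ∧ ¬ (G.Reachable x y ∧ G.dist x y ≤ k)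

lemma farOrder_trans [IsStrictOrder V r] (hk : 1 ≤ k)
    (hG : ∀ x y, G.Adj x y ↔ x ≠ y ∧ ¬ r x y ∧ ¬ r y x)
    (hxy : farOrder r G k x y) (hyz : farOrder r G k y z) : farOrder r G k x z := by
  refine ⟨_root_.trans hxy.1 hyz.1, fun ⟨hreach, hdist⟩ => ?_⟩
  obtain ⟨p, hp⟩ := hreach.exists_walk_length_eq_dist
  obtain ⟨q₁, q₂, hq⟩ := p.exists_walks_length_add_le hG hxy.1 hyz.1
  have h₁ : k < q₁.length := not_le.1 fun h => hxy.2 ⟨q₁.reachable, (G.dist_le q₁).trans h⟩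
  have h₂ : k < q₂.length := not_le.1 fun h => hyz.2 ⟨q₂.reachable, (G.dist_le q₂).trans h⟩
  omega

lemma isStrictOrder_farOrder [IsStrictOrder V r] (hk : 1 ≤ k)
    (hG : ∀ x y, G.Adj x y ↔ x ≠ y ∧ ¬ r x y ∧ ¬ r y x) : IsStrictOrder V (farOrder r G k) where
  irrefl x h := irrefl x h.1
  trans _ _ _ := farOrder_trans hk hG

lemma reachable_and_dist_le_iff_not_farOrder (hk : 1 ≤ k)
    (hG : ∀ x y, G.Adj x y ↔ x ≠ y ∧ ¬ r x y ∧ ¬ r y x) (hne : x ≠ y) :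
    G.Reachable x y ∧ G.dist x y ≤ k ↔ ¬ farOrder r G k x y ∧ ¬ farOrder r G k y x := by
  refine ⟨fun h => ⟨fun h' => h'.2 h, fun h' => h'.2 (reachable_and_dist_le_comm.1 h)⟩,
    fun ⟨hxy, hyx⟩ => by_contra fun hfar => ?_⟩
  by_cases rxy : r x y
  · exact hxy ⟨rxy, hfar⟩
  by_cases ryx : r y x
  · exact hyx ⟨ryx, fun h => hfar (reachable_and_dist_le_comm.1 h)⟩
  have hadj := (hG x y).2 ⟨hne, rxy, ryx⟩
  exact hfar ⟨hadj.reachable, (G.dist_le hadj.toWalk).trans (by simpa using hk)⟩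

lemma kIndependent_of_isChain_farOrder {S : Finset V}
    (hS : IsChain (farOrder r G k) (S : Set V)) :
    KIndependent G k S := fun _ hx _ hy hne hnear =>
  (hS hx hy hne).elim (·.2 hnear) (·.2 (reachable_and_dist_le_comm.1 hnear))

end Incomparability

theorem stmt8 (G : SimpleGraph V) (hG : IsIncomparabilityGraph G)
    (k : ℕ) (hk : 1 ≤ k) :
    rhoK G k = gammaK G k := by
  obtain ⟨r, hr, hadj⟩ := hG
  have := isStrictOrder_farOrder hk hadj
  let _ : PartialOrder V := partialOrderOfSO (farOrder r G k)
  obtain ⟨f, hf⟩ := exists_strictMono_fin_of_isChain_card_le (n := gammaK G k) fun S hS =>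
    card_le_gammaK (kIndependent_of_isChain_farOrder hS.lt_of_le)
  refine le_antisymm (rhoK_le_of_fibers f fun x y hne hxy => ?_) gammaK_le_rhoK
  exact (reachable_and_dist_le_iff_not_farOrder hk hadj hne).2
    ⟨fun h => (hf h).ne hxy, fun h => (hf h).ne' hxy⟩
end

section
/- For every finite interval graph G and every k ≥ 1, ρₖ(G) = γₖ(G): the minimal number of parts of diameter at most k covering all vertices equals the maximal size of a set of vertices with pairwise distances greater than k. -/
variable {V : Type*} [Fintype V] [DecidableEq V]

/-- `G` is an interval graph: the intersection graph of a family of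
closed intervals on the real line. -/
def IsIntervalGraph (G : SimpleGraph V) : Prop :=
  ∃ f : V → ℝ × ℝ, (∀ v, (f v).1 ≤ (f v).2) ∧
    ∀ x y, x ≠ y →
      (G.Adj x y ↔ (Set.Icc (f x).1 (f x).2 ∩ Set.Icc (f y).1 (f y).2).Nonempty)

section Aux

variable {G : SimpleGraph V} {f : V → ℝ × ℝ}

lemma adj_of_common
    (hf2 : ∀ x y, x ≠ y →
      (G.Adj x y ↔ (Set.Icc (f x).1 (f x).2 ∩ Set.Icc (f y).1 (f y).2).Nonempty))
    {x z : V} (hne : x ≠ z) {q : ℝ} (h1 : (f x).1 ≤ q) (h2 : q ≤ (f x).2)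
    (h3 : (f z).1 ≤ q) (h4 : q ≤ (f z).2) : G.Adj x z :=
  (hf2 x z hne).2 ⟨q, ⟨h1, h2⟩, ⟨h3, h4⟩⟩

/-- Key geometric lemma: if `q` is a point at least the right endpoint of `v`,
belonging to the interval of `x`, and a walk from `z` to `v` satisfies the invariant
at `z`, then there is a short walk from `x` to `z`. -/
lemma walk_lemma (hf1 : ∀ v, (f v).1 ≤ (f v).2)
    (hf2 : ∀ x y, x ≠ y →
      (G.Adj x y ↔ (Set.Icc (f x).1 (f x).2 ∩ Set.Icc (f y).1 (f y).2).Nonempty))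
    (v : V) :
    ∀ {z : V} (w : G.Walk z v), ∀ {x : V} {q : ℝ},
      (f v).2 ≤ q → (f x).1 ≤ q → q ≤ (f x).2 → ((f z).1 ≤ q → q ≤ (f z).2) →
      ∃ u : G.Walk x z, u.length ≤ max 1 w.length := by
  intro z w
  induction w with
  | @nil a =>
    intro x q hpq hxl hxr hinv
    have hq : q = (f a).2 := le_antisymm (hinv (le_trans (hf1 a) hpq)) hpq
    by_cases hxv : x = a
    · subst hxv; exact ⟨.nil, by simp⟩
    · exact ⟨.cons (adj_of_common hf2 hxv hxl hxr (hq ▸ hf1 a) hq.le) .nil, by simp⟩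
  | @cons z z' a h w' ih =>
    intro x q hpq hxl hxr hinv
    by_cases hzl : (f z).1 ≤ q
    · have hzr := hinv hzl
      by_cases hxz : x = z
      · subst hxz; exact ⟨.nil, by simp⟩
      · exact ⟨.cons (adj_of_common hf2 hxz hxl hxr hzl hzr) .nil,
          le_trans le_rfl (le_max_left _ _)⟩
    · push_neg at hzl
      obtain ⟨t, ⟨ht1, ht2⟩, ⟨ht3, ht4⟩⟩ := (hf2 z z' h.ne).1 h
      have hz'r : q ≤ (f z').2 := le_trans (le_of_lt (lt_of_lt_of_le hzl ht1)) ht4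
      obtain ⟨u', hu'⟩ := ih hpq hxl hxr (fun _ => hz'r)
      rcases Nat.eq_zero_or_pos w'.length with h0 | hpos
      · exfalso
        have hz'v : z' = a := SimpleGraph.Walk.eq_of_length_eq_zero h0
        have : t ≤ q := le_trans ht4 (by rw [hz'v]; exact hpq)
        exact absurd (lt_of_lt_of_le hzl ht1) (not_lt.2 this)
      · refine ⟨u'.concat h.symm, ?_⟩
        rw [SimpleGraph.Walk.length_concat, SimpleGraph.Walk.length_cons]
        have hmax : max 1 w'.length = w'.length := Nat.max_eq_right hpos
        rw [hmax] at hu'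
        have : max 1 (w'.length + 1) = w'.length + 1 := Nat.max_eq_right (by omega)
        omega

lemma ball_half (hf1 : ∀ v, (f v).1 ≤ (f v).2)
    (hf2 : ∀ x y, x ≠ y →
      (G.Adj x y ↔ (Set.Icc (f x).1 (f x).2 ∩ Set.Icc (f y).1 (f y).2).Nonempty))
    {k : ℕ} {R : Finset V} {v : V}
    (hmin : ∀ u ∈ R, (f v).2 ≤ (f u).2) {x y : V} (hx : x ∈ R) (hy : y ∈ R)
    (hxv : G.Reachable x v ∧ G.dist x v ≤ k) (hyv : G.Reachable y v ∧ G.dist y v ≤ k)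
    (hxy : (f x).1 ≤ (f y).1) : G.Reachable x y ∧ G.dist x y ≤ k := by
  by_cases hyeq : y = v
  · subst hyeq; exact hxv
  obtain ⟨w, hw⟩ := hyv.1.exists_walk_length_eq_dist
  set q := max (f v).2 (f x).1 with hqdef
  have hpq : (f v).2 ≤ q := le_max_left _ _
  have hxl : (f x).1 ≤ q := le_max_right _ _
  have hxr : q ≤ (f x).2 := max_le (hmin x hx) (hf1 x)
  have hinv : (f y).1 ≤ q → q ≤ (f y).2 :=
    fun _ => max_le (hmin y hy) (le_trans hxy (hf1 y))
  obtain ⟨u, hu⟩ := walk_lemma hf1 hf2 v w hpq hxl hxr hinv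
  have hwpos : 1 ≤ w.length := by
    rcases Nat.eq_zero_or_pos w.length with h0 | hpos
    · exact absurd (SimpleGraph.Walk.eq_of_length_eq_zero h0) hyeq
    · exact hpos
  have hwk : w.length ≤ k := by rw [hw]; exact hyv.2
  refine ⟨u.reachable, le_trans (SimpleGraph.dist_le u) (le_trans hu ?_)⟩
  rw [Nat.max_eq_right hwpos]; exact hwk

lemma ball (hf1 : ∀ v, (f v).1 ≤ (f v).2)
    (hf2 : ∀ x y, x ≠ y →
      (G.Adj x y ↔ (Set.Icc (f x).1 (f x).2 ∩ Set.Icc (f y).1 (f y).2).Nonempty))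
    {k : ℕ} {R : Finset V} {v : V}
    (hmin : ∀ u ∈ R, (f v).2 ≤ (f u).2) {x y : V} (hx : x ∈ R) (hy : y ∈ R)
    (hxv : G.Reachable x v ∧ G.dist x v ≤ k) (hyv : G.Reachable y v ∧ G.dist y v ≤ k) :
    G.Reachable x y ∧ G.dist x y ≤ k := by
  rcases le_total (f x).1 (f y).1 with hle | hle
  · exact ball_half hf1 hf2 hmin hx hy hxv hyv hle
  · obtain ⟨hr, hd⟩ := ball_half hf1 hf2 hmin hy hx hyv hxv hle
    exact ⟨hr.symm, by rwa [SimpleGraph.dist_comm]⟩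

lemma greedy_s9 (hf1 : ∀ v, (f v).1 ≤ (f v).2)
    (hf2 : ∀ x y, x ≠ y →
      (G.Adj x y ↔ (Set.Icc (f x).1 (f x).2 ∩ Set.Icc (f y).1 (f y).2).Nonempty))
    {k : ℕ} :
    ∀ (n : ℕ) (R : Finset V), R.card ≤ n →
      ∃ (P : Finset (Finset V)) (S : Finset V),
        (∀ s ∈ P, DiamAtMost G k s) ∧ (∀ u ∈ R, ∃ s ∈ P, u ∈ s) ∧
        KIndependent G k S ∧ S ⊆ R ∧ P.card ≤ S.card := by
  intro n
  induction n with
  | zero =>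
    intro R hR
    have : R = ∅ := Finset.card_eq_zero.1 (Nat.le_zero.1 hR)
    subst this
    exact ⟨∅, ∅, by simp, by simp, fun x hx => absurd hx (Finset.notMem_empty x),
      le_rfl, le_rfl⟩
  | succ n ih =>
    intro R hR
    rcases R.eq_empty_or_nonempty with hRe | hRe
    · subst hRe
      exact ⟨∅, ∅, by simp, by simp, fun x hx => absurd hx (Finset.notMem_empty x),
        le_rfl, le_rfl⟩
    classical
    obtain ⟨v, hv, hvmin⟩ := R.exists_min_image (fun u => (f u).2) hRe
    set C := R.filter (fun u => G.Reachable u v ∧ G.dist u v ≤ k) with hCdef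
    set R' := R \ C with hR'def
    have hvC : v ∈ C := by
      rw [hCdef, Finset.mem_filter]
      exact ⟨hv, SimpleGraph.Reachable.refl v, le_of_eq_of_le SimpleGraph.dist_self (Nat.zero_le k)⟩
    have hvR' : v ∉ R' := by simp [hR'def, hv, hvC]
    have hR'card : R'.card ≤ n := by
      have hss : R' ⊂ R :=
        Finset.ssubset_iff_of_subset (Finset.sdiff_subset) |>.2 ⟨v, hv, hvR'⟩
      have := Finset.card_lt_card hss
      omega
    obtain ⟨P', S', hP'diam, hP'cov, hS'ind, hS'sub, hcard⟩ := ih R' hR'card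
    have hS'v : v ∉ S' := fun h => hvR' (hS'sub h)
    refine ⟨insert C P', insert v S', ?_, ?_, ?_, ?_, ?_⟩
    · intro s hs
      rcases Finset.mem_insert.1 hs with rfl | hs'
      · intro x hxs y hys
        rw [hCdef, Finset.mem_filter] at hxs hys
        exact ball hf1 hf2 hvmin hxs.1 hys.1 hxs.2 hys.2
      · exact hP'diam s hs'
    · intro u hu
      by_cases huC : u ∈ C
      · exact ⟨C, Finset.mem_insert_self _ _, huC⟩
      · obtain ⟨s, hs, hus⟩ := hP'cov u (Finset.mem_sdiff.2 ⟨hu, huC⟩)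
        exact ⟨s, Finset.mem_insert_of_mem hs, hus⟩
    · intro x hxS y hyS hne hcon
      rcases Finset.mem_insert.1 hxS with rfl | hxS' <;>
        rcases Finset.mem_insert.1 hyS with rfl | hyS'
      · exact hne rfl
      · have hyR' : y ∈ R' := hS'sub hyS'
        have hyC : y ∉ C := (Finset.mem_sdiff.1 hyR').2
        apply hyC
        rw [hCdef, Finset.mem_filter]
        exact ⟨(Finset.mem_sdiff.1 hyR').1, hcon.1.symm,
          by rw [SimpleGraph.dist_comm]; exact hcon.2⟩
      · have hxR' : x ∈ R' := hS'sub hxS'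
        have hxC : x ∉ C := (Finset.mem_sdiff.1 hxR').2
        apply hxC
        rw [hCdef, Finset.mem_filter]
        exact ⟨(Finset.mem_sdiff.1 hxR').1, hcon.1, hcon.2⟩
      · exact hS'ind x hxS' y hyS' hne hcon
    · intro u hu
      rcases Finset.mem_insert.1 hu with rfl | hu'
      · exact hv
      · exact (Finset.mem_sdiff.1 (hS'sub hu')).1
    · calc (insert C P').card ≤ P'.card + 1 := Finset.card_insert_le _ _
        _ ≤ S'.card + 1 := by omega
        _ = (insert v S').card := (Finset.card_insert_of_notMem hS'v).symm

end Aux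

theorem stmt9 (G : SimpleGraph V) (hG : IsIntervalGraph G)
    (k : ℕ) (hk : 1 ≤ k) :
    rhoK G k = gammaK G k := by
  classical
  obtain ⟨f, hf1, hf2⟩ := hG
  have hγbdd : BddAbove {n | ∃ S : Finset V, KIndependent G k S ∧ S.card = n} :=
    ⟨Fintype.card V, fun n ⟨S, _, hS⟩ => hS ▸ Finset.card_le_univ S⟩
  have hγne : {n | ∃ S : Finset V, KIndependent G k S ∧ S.card = n}.Nonempty :=
    ⟨0, ∅, fun x hx => absurd hx (Finset.notMem_empty x), rfl⟩
  have hρne : {n | ∃ P : Finset (Finset V), (∀ s ∈ P, DiamAtMost G k s) ∧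
      (∀ v : V, ∃ s ∈ P, v ∈ s) ∧ P.card = n}.Nonempty := by
    refine ⟨(Finset.univ.image fun v : V => ({v} : Finset V)).card,
      Finset.univ.image fun v : V => ({v} : Finset V), ?_, ?_, rfl⟩
    · intro s hs
      obtain ⟨v, _, rfl⟩ := Finset.mem_image.1 hs
      intro x hx y hy
      rw [Finset.mem_singleton] at hx hy
      subst hx; subst hy
      exact ⟨SimpleGraph.Reachable.refl _, le_of_eq_of_le SimpleGraph.dist_self (Nat.zero_le k)⟩
    · intro v
      exact ⟨{v}, Finset.mem_image.2 ⟨v, Finset.mem_univ v, rfl⟩, Finset.mem_singleton_self v⟩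
  apply le_antisymm
  · obtain ⟨P, S, hPd, hPc, hSi, _, hcard⟩ :=
      greedy_s9 (G := G) hf1 hf2 (Fintype.card V) Finset.univ (by simp)
    have h1 : rhoK G k ≤ P.card :=
      Nat.sInf_le ⟨P, hPd, fun u => hPc u (Finset.mem_univ u), rfl⟩
    have h2 : S.card ≤ gammaK G k := le_csSup hγbdd ⟨S, hSi, rfl⟩
    exact le_trans h1 (le_trans hcard h2)
  · obtain ⟨S, hSi, hScard⟩ := Nat.sSup_mem hγne hγbdd
    obtain ⟨P, hPd, hPc, hPcard⟩ := Nat.sInf_mem hρne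
    rw [show gammaK G k = S.card from hScard.symm,
        show rhoK G k = P.card from hPcard.symm]
    choose g hg1 hg2 using hPc
    apply Finset.card_le_card_of_injOn g (fun x _ => hg1 x)
    intro x hx y hy hxy
    by_contra hne
    have hd := hPd (g x) (hg1 x) x (hg2 x) y (by rw [hxy]; exact hg2 y)
    exact hSi x hx y hy hne hd
end

section
/- Every finite interval graph G can be partitioned into γ₂(G) sets each of radius at most 1 (each set contained in the closed neighborhood of one of its vertices), where γ₂(G) is the maximum size of a set of vertices with pairwise graph distance greater than 2. -/
variable {V : Type*} [Fintype V] [DecidableEq V]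

/-- `S` is `2`-independent: distinct vertices of `S` are at distance greater than `2`. -/
def TwoIndependent (G : SimpleGraph V) (S : Finset V) : Prop :=
  ∀ x ∈ S, ∀ y ∈ S, x ≠ y → ¬ (G.Reachable x y ∧ G.dist x y ≤ 2)

/-- `γ₂(G)`: maximal size of a `2`-independent set. -/
noncomputable def gamma2 (G : SimpleGraph V) : ℕ :=
  sSup {n | ∃ S : Finset V, TwoIndependent G S ∧ S.card = n}

/-- `s` has radius at most 1: some vertex of `s` is adjacent (or equal) to all of `s`. -/
def RadiusAtMostOne (G : SimpleGraph V) (s : Finset V) : Prop :=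
  ∃ v ∈ s, ∀ u ∈ s, u = v ∨ G.Adj v u

/-
Greedy argument. Repeatedly take the remaining vertex `u` whose interval ends first and the
vertex `c` of `N[u]` whose interval ends last, then discard `N[c]`. Every vertex within
distance `2` of `u` starts before `c` ends, so a remaining vertex outside `N[c]` (which ends
after `u`, hence after `c` starts) is at distance greater than `2` from `u`. The chosen `u`s thus
form a 2-independent set `S` and the chosen `c`s a dominating set `C` with `|C| ≤ |S|`. In any
graph a 2-independent set injects into a dominating set (two vertices with a common dominator
are at distance at most `2`), so `γ₂(G) = |C|`, and sending each vertex to a dominator in `C`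
yields the required partition.
-/

open SimpleGraph

section
omit [Fintype V] [DecidableEq V]

variable {G : SimpleGraph V}

theorem SimpleGraph.reachable_and_dist_le_two_iff {x y : V} :
    G.Reachable x y ∧ G.dist x y ≤ 2 ↔ x = y ∨ G.Adj x y ∨ ∃ w, G.Adj x w ∧ G.Adj w y := by
  constructor
  · rintro ⟨hr, hd⟩
    obtain ⟨p, hp⟩ := hr.exists_walk_length_eq_dist
    rw [← hp] at hd
    rcases p with _ | ⟨h, _ | ⟨h', _ | ⟨_, _⟩⟩⟩
    · exact Or.inl rfl
    · exact Or.inr (Or.inl h)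
    · exact Or.inr (Or.inr ⟨_, h, h'⟩)
    · simp at hd
  · rintro (rfl | h | ⟨w, h₁, h₂⟩)
    · simp
    · exact ⟨h.reachable, (dist_eq_one_iff_adj.2 h).le.trans one_le_two⟩
    · let p : G.Walk x y := .cons h₁ (.cons h₂ .nil)
      exact ⟨p.reachable, dist_le p⟩

def Dominates (G : SimpleGraph V) (C : Finset V) (U : Set V) : Prop :=
  ∀ v ∈ U, ∃ c ∈ C, v = c ∨ G.Adj c v

namespace TwoIndependent

variable {S : Finset V}

theorem eq_of_mem_closedNbhd (hS : TwoIndependent G S) {x y c : V} (hx : x ∈ S) (hy : y ∈ S)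
    (hcx : x = c ∨ G.Adj c x) (hcy : y = c ∨ G.Adj c y) : x = y := by
  by_contra hxy
  refine hS x hx y hy hxy (reachable_and_dist_le_two_iff.2 ?_)
  rcases hcx with rfl | hcx <;> rcases hcy with rfl | hcy
  · exact Or.inl rfl
  · exact Or.inr (Or.inl hcy)
  · exact Or.inr (Or.inl hcx.symm)
  · exact Or.inr (Or.inr ⟨c, hcx.symm, hcy⟩)

theorem card_le_of_dominates (hS : TwoIndependent G S) {C : Finset V}
    (hC : Dominates G C Set.univ) : S.card ≤ C.card := by
  choose g hgC hg using fun v => hC v (Set.mem_univ v)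
  exact Finset.card_le_card_of_injOn g (fun v _ => hgC v) fun x hx y hy hxy =>
    hS.eq_of_mem_closedNbhd hx hy (hg x) (hxy ▸ hg y)

theorem insert [DecidableEq V] (hS : TwoIndependent G S) {u : V}
    (hu : ∀ y ∈ S, ¬(G.Reachable u y ∧ G.dist u y ≤ 2)) : TwoIndependent G (insert u S) := by
  intro x hx y hy hxy
  rw [Finset.mem_insert] at hx hy
  rcases hx with rfl | hx <;> rcases hy with rfl | hy
  · exact absurd rfl hxy
  · exact hu y hy
  · rw [dist_comm, reachable_comm]
    exact hu x hx
  · exact hS x hx y hy hxy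

end TwoIndependent

theorem gamma2_eq_card_of_dominates {S C : Finset V} (hS : TwoIndependent G S)
    (hC : Dominates G C Set.univ) (hCS : C.card ≤ S.card) : gamma2 G = C.card := by
  have hbdd : ∀ n ∈ {n | ∃ S : Finset V, TwoIndependent G S ∧ S.card = n}, n ≤ C.card := by
    rintro n ⟨T, hT, rfl⟩
    exact hT.card_le_of_dominates hC
  have hS_mem : S.card ∈ {n | ∃ S : Finset V, TwoIndependent G S ∧ S.card = n} := ⟨S, hS, rfl⟩
  exact le_antisymm (csSup_le ⟨_, hS_mem⟩ hbdd) (hCS.trans (le_csSup ⟨_, hbdd⟩ hS_mem))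

theorem Dominates.exists_partition [Fintype V] [DecidableEq V] {C : Finset V}
    (hC : Dominates G C Set.univ) :
    ∃ P : Finset (Finset V), P.card = C.card ∧ (∀ s ∈ P, RadiusAtMostOne G s) ∧
      (∀ s ∈ P, ∀ t ∈ P, s ≠ t → Disjoint s t) ∧ (∀ v : V, ∃ s ∈ P, v ∈ s) := by
  -- Each `c ∈ C` is its own center, so the parts are nonempty and indexed injectively by `C`.
  have hcenter : ∀ v, ∃ c ∈ C, (v = c ∨ G.Adj c v) ∧ (v ∈ C → v = c) := fun v => by
    by_cases hv : v ∈ C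
    · exact ⟨v, hv, Or.inl rfl, fun _ => rfl⟩
    · obtain ⟨c, hc, hvc⟩ := hC v (Set.mem_univ v)
      exact ⟨c, hc, hvc, fun h => absurd h hv⟩
  choose φ hφC hφ hφfix using hcenter
  let part : V → Finset V := fun c => Finset.univ.filter fun v => φ v = c
  have mem_part {v c : V} : v ∈ part c ↔ φ v = c := by simp [part]
  have self_mem_part {c : V} (hc : c ∈ C) : c ∈ part c := mem_part.2 (hφfix c hc).symm
  refine ⟨C.image part, Finset.card_image_of_injOn ?_, ?_, ?_, ?_⟩
  · intro c hc d _ hcd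
    have hcd' : c ∈ part d := (hcd : part c = part d) ▸ self_mem_part hc
    exact (hφfix c hc).trans (mem_part.1 hcd')
  · simp only [Finset.forall_mem_image]
    intro c hc
    refine ⟨c, self_mem_part hc, fun u hu => ?_⟩
    exact mem_part.1 hu ▸ hφ u
  · simp only [Finset.forall_mem_image]
    intro c _ d _ hcd
    refine Finset.disjoint_left.2 fun v hvc hvd => hcd ?_
    rw [← mem_part.1 hvc, ← mem_part.1 hvd]
  · exact fun v => ⟨part (φ v), Finset.mem_image_of_mem _ (hφC v), mem_part.2 rfl⟩

structure IsIntervalModel {α : Type*} [LinearOrder α] (G : SimpleGraph V) (l r : V → α) :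
    Prop where
  left_le_right : ∀ v, l v ≤ r v
  adj_iff : ∀ {x y}, x ≠ y → (G.Adj x y ↔ l x ≤ r y ∧ l y ≤ r x)

theorem IsIntervalGraph.exists_isIntervalModel (hG : IsIntervalGraph G) :
    ∃ l r : V → ℝ, IsIntervalModel G l r := by
  obtain ⟨f, hf, hadj⟩ := hG
  refine ⟨fun v => (f v).1, fun v => (f v).2, ⟨hf, fun {x y} hxy => ?_⟩⟩
  rw [hadj x y hxy, Set.Icc_inter_Icc, Set.nonempty_Icc]
  simp [hf x, hf y, and_comm]

namespace IsIntervalModel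

variable {α : Type*} [LinearOrder α] {l r : V → α}

theorem not_reachable_and_dist_le_two (hM : IsIntervalModel G l r) {u c w : V}
    (hc : c = u ∨ G.Adj u c) (hmax : ∀ x, (x = u ∨ G.Adj u x) → r x ≤ r c)
    (huw : r u ≤ r w) (hw : ¬(w = c ∨ G.Adj c w)) : ¬(G.Reachable u w ∧ G.dist u w ≤ 2) := by
  intro hdist
  have hlc : l c ≤ r u := by
    rcases hc with rfl | h
    · exact hM.left_le_right c
    · exact ((hM.adj_iff h.ne).1 h).2
  have hlw : l w ≤ r c := by
    rcases reachable_and_dist_le_two_iff.1 hdist with rfl | h | ⟨x, hux, hxw⟩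
    · exact (hM.left_le_right u).trans (hmax u (Or.inl rfl))
    · exact ((hM.adj_iff h.ne).1 h).2.trans (hmax u (Or.inl rfl))
    · exact ((hM.adj_iff hxw.ne).1 hxw).2.trans (hmax x (Or.inr hux))
  rcases eq_or_ne w c with rfl | hwc
  · exact hw (Or.inl rfl)
  · exact hw (Or.inr ((hM.adj_iff hwc.symm).2 ⟨hlc.trans huw, hlw⟩))

theorem exists_twoIndependent_dominates [Fintype V] [DecidableEq V] (hM : IsIntervalModel G l r)
    (U : Finset V) :
    ∃ S C : Finset V, S ⊆ U ∧ TwoIndependent G S ∧ Dominates G C U ∧ C.card ≤ S.card := by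
  classical
  induction U using Finset.strongInduction with
  | H U ih =>
  rcases U.eq_empty_or_nonempty with rfl | hU
  · exact ⟨∅, ∅, subset_rfl, fun x hx => by simp at hx, fun v hv => by simp at hv, le_rfl⟩
  obtain ⟨u, huU, humin⟩ := U.exists_min_image r hU
  obtain ⟨c, hc, hmax⟩ :=
    (Finset.univ.filter fun x => x = u ∨ G.Adj u x).exists_max_image r ⟨u, by simp⟩
  simp only [Finset.mem_filter, Finset.mem_univ, true_and] at hc hmax
  set U' := U.filter fun v => ¬(v = c ∨ G.Adj c v)
  have hu : u ∉ U' := by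
    simp only [U', Finset.mem_filter, not_and, not_not]
    exact fun _ => hc.imp Eq.symm Adj.symm
  obtain ⟨S, C, hSU, hS, hC, hCS⟩ :=
    ih U' (Finset.filter_ssubset.2 ⟨u, huU, fun h => hu (Finset.mem_filter.2 ⟨huU, h⟩)⟩)
  refine ⟨insert u S, insert c C, Finset.insert_subset huU (hSU.trans (Finset.filter_subset _ _)),
    hS.insert fun y hy => ?_, fun v hv => ?_, ?_⟩
  · have hy' := Finset.mem_filter.1 (hSU hy)
    exact hM.not_reachable_and_dist_le_two hc hmax (humin y hy'.1) hy'.2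
  · by_cases hvc : v = c ∨ G.Adj c v
    · exact ⟨c, Finset.mem_insert_self c C, hvc⟩
    · obtain ⟨d, hd, hvd⟩ := hC v (Finset.mem_filter.2 ⟨hv, hvc⟩)
      exact ⟨d, Finset.mem_insert_of_mem hd, hvd⟩
  · calc (insert c C).card ≤ C.card + 1 := Finset.card_insert_le c C
      _ ≤ S.card + 1 := Nat.add_le_add_right hCS 1
      _ = (insert u S).card := (Finset.card_insert_of_notMem fun h => hu (hSU h)).symm

end IsIntervalModel

end

theorem stmt10 (G : SimpleGraph V) (hG : IsIntervalGraph G) :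
    ∃ P : Finset (Finset V),
      P.card = gamma2 G ∧
      (∀ s ∈ P, RadiusAtMostOne G s) ∧
      (∀ s ∈ P, ∀ t ∈ P, s ≠ t → Disjoint s t) ∧
      (∀ v : V, ∃ s ∈ P, v ∈ s) := by
  obtain ⟨l, r, hM⟩ := hG.exists_isIntervalModel
  obtain ⟨S, C, -, hS, hC, hCS⟩ := hM.exists_twoIndependent_dominates Finset.univ
  rw [Finset.coe_univ] at hC
  rw [gamma2_eq_card_of_dominates hS hC hCS]
  exact hC.exists_partition
end
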